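/- Let n ≥ 1, let P be a probability measure, and let E, H₁, …, Hₙ be measurable events with P(Hᵢ) > 0 for all i; set pᵢ = P(E|Hᵢ). If pᵢ > 0 for all i, then P(E | ⋃ᵢ Hᵢ) ≥ 1/(1 + Σᵢ (1−pᵢ)/pᵢ); and if pᵢ < 1 for all i, then P(E | ⋃ᵢ Hᵢ) ≤ (Σᵢ pᵢ/(1−pᵢ))/(1 + Σᵢ pᵢ/(1−pᵢ)). -/

import Mathlib

open MeasureTheory Set

/-- Conditional probability `P(E|H) = P(E ∩ H)/P(H)` as a real number. -/
noncomputable def condP {Ω : Type*} [MeasurableSpace Ω] (μ : Measure Ω) (E H : Set Ω) : ℝ :=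
  (μ (E ∩ H)).toReal / (μ H).toReal

/-!
With `aᵢ = P(E ∩ Hᵢ)`, `cᵢ = P(Eᶜ ∩ Hᵢ)` and `A`, `C` the same quantities for `U = ⋃ Hᵢ`, the odds
against `E` given `Hᵢ` are `(1 - pᵢ) / pᵢ = cᵢ / aᵢ ≥ cᵢ / A`; summing and using subadditivity
`C ≤ ∑ cᵢ` bounds the odds `C / A` against `E` given `U`, and `P(E | U) = 1 / (1 + C / A)`.
The upper bound is the lower bound for `Eᶜ`, since `P(Eᶜ | H) = 1 - P(E | H)`.
-/

section

variable {Ω ι : Type*} [MeasurableSpace Ω] {μ : Measure Ω} {E H : Set Ω}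

lemma condP_nonneg : 0 ≤ condP μ E H := by
  unfold condP
  positivity

lemma condP_pos_iff : 0 < condP μ E H ↔ 0 < μ.real (E ∩ H) ∧ 0 < μ.real H := by
  rw [condP, ← measureReal_def, ← measureReal_def, div_pos_iff]
  have := measureReal_nonneg (μ := μ) (s := H)
  constructor
  · rintro (hpos | ⟨_, hneg⟩)
    exacts [hpos, absurd hneg this.not_gt]
  · exact Or.inl

lemma condP_compl (hE : MeasurableSet E) (hH : μ.real H ≠ 0) :
    condP μ Eᶜ H = 1 - condP μ E H := by
  have hfin : μ H ≠ ⊤ := fun h => hH (by simp [measureReal_def, h])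
  have hsplit := measureReal_inter_add_sdiff (μ := μ) hE hfin
  rw [inter_comm H E, sdiff_eq, inter_comm H Eᶜ] at hsplit
  simp only [condP, ← measureReal_def]
  field_simp
  linarith

lemma one_sub_condP_div_condP (hE : MeasurableSet E) (hH : μ.real H ≠ 0) :
    (1 - condP μ E H) / condP μ E H = μ.real (Eᶜ ∩ H) / μ.real (E ∩ H) := by
  rw [← condP_compl hE hH]
  exact div_div_div_cancel_right₀ hH _ _

variable [IsFiniteMeasure μ] [Fintype ι]

lemma measureReal_inter_iUnion_div_le_sum (F : Set Ω) (H : ι → Set Ω)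
    (hE : ∀ i, 0 < μ.real (E ∩ H i)) :
    μ.real (F ∩ ⋃ i, H i) / μ.real (E ∩ ⋃ i, H i) ≤ ∑ i, μ.real (F ∩ H i) / μ.real (E ∩ H i) :=
  calc μ.real (F ∩ ⋃ i, H i) / μ.real (E ∩ ⋃ i, H i)
      ≤ (∑ i, μ.real (F ∩ H i)) / μ.real (E ∩ ⋃ i, H i) := by
        rw [inter_iUnion]
        gcongr
        exact measureReal_iUnion_fintype_le _
    _ = ∑ i, μ.real (F ∩ H i) / μ.real (E ∩ ⋃ i, H i) := Finset.sum_div _ _ _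
    _ ≤ ∑ i, μ.real (F ∩ H i) / μ.real (E ∩ H i) := by
        gcongr with i
        · exact hE i
        · finiteness
        · exact subset_iUnion H i

variable [Nonempty ι]

theorem one_div_one_add_sum_le_condP_iUnion (hE : MeasurableSet E) (H : ι → Set Ω)
    (hpos : ∀ i, 0 < condP μ E (H i)) :
    1 / (1 + ∑ i, (1 - condP μ E (H i)) / condP μ E (H i)) ≤ condP μ E (⋃ i, H i) := by
  obtain ⟨i₀⟩ := ‹Nonempty ι›
  have hEH i := (condP_pos_iff.1 (hpos i)).1
  have hEU : 0 < μ.real (E ∩ ⋃ i, H i) :=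
    (hEH i₀).trans_le (measureReal_mono (inter_subset_inter_right _ (subset_iUnion H i₀)))
  have hU : 0 < μ.real (⋃ i, H i) := hEU.trans_le (measureReal_mono inter_subset_right)
  have hodds i := one_sub_condP_div_condP hE (condP_pos_iff.1 (hpos i)).2.ne'
  have hpU : condP μ E (⋃ i, H i) ≠ 0 := (div_pos hEU hU).ne'
  calc 1 / (1 + ∑ i, (1 - condP μ E (H i)) / condP μ E (H i))
      ≤ 1 / (1 + (1 - condP μ E (⋃ i, H i)) / condP μ E (⋃ i, H i)) := by
        simp only [hodds, one_sub_condP_div_condP hE hU.ne']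
        gcongr
        exact measureReal_inter_iUnion_div_le_sum _ H hEH
    _ = condP μ E (⋃ i, H i) := by
        field_simp
        ring

theorem condP_iUnion_le (hE : MeasurableSet E) (H : ι → Set Ω) (hH : ∀ i, μ (H i) ≠ 0)
    (hlt : ∀ i, condP μ E (H i) < 1) :
    condP μ E (⋃ i, H i) ≤
      (∑ i, condP μ E (H i) / (1 - condP μ E (H i))) /
        (1 + ∑ i, condP μ E (H i) / (1 - condP μ E (H i))) := by
  obtain ⟨i₀⟩ := ‹Nonempty ι›
  have hcompl i := condP_compl (H := H i) hE ((measureReal_ne_zero_iff).2 (hH i))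
  have hU : μ.real (⋃ i, H i) ≠ 0 :=
    (measureReal_ne_zero_iff).2 fun h => hH i₀ (measure_mono_null (subset_iUnion H i₀) h)
  have hlower := one_div_one_add_sum_le_condP_iUnion hE.compl H fun i => by
    rw [hcompl]
    linarith [hlt i]
  simp only [hcompl, sub_sub_cancel, condP_compl hE hU] at hlower
  set S := ∑ i, condP μ E (H i) / (1 - condP μ E (H i))
  have hS : 0 ≤ S :=
    Finset.sum_nonneg fun i _ => div_nonneg condP_nonneg (sub_nonneg.2 (hlt i).le)
  have hS_div : S / (1 + S) = 1 - 1 / (1 + S) := by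
    field_simp
    ring
  linarith

end

theorem general_or_rule_bounds_general {Ω : Type*} [MeasurableSpace Ω]
    (μ : Measure Ω) [IsProbabilityMeasure μ] (n : ℕ) (hn : 1 ≤ n)
    (E : Set Ω) (H : Fin n → Set Ω)
    (hE : MeasurableSet E)
    (hpos : ∀ i, 0 < μ (H i))
    (p : Fin n → ℝ) (hp : ∀ i, p i = condP μ E (H i)) :
    ((∀ i, 0 < p i) →
      1 / (1 + ∑ i, (1 - p i) / p i) ≤ condP μ E (⋃ i, H i)) ∧
    ((∀ i, p i < 1) →
      condP μ E (⋃ i, H i) ≤ (∑ i, p i / (1 - p i)) / (1 + ∑ i, p i / (1 - p i))) := by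
  have : Nonempty (Fin n) := ⟨⟨0, hn⟩⟩
  obtain rfl : p = fun i => condP μ E (H i) := funext hp
  exact ⟨one_div_one_add_sum_le_condP_iUnion hE H, condP_iUnion_le hE H fun i => (hpos i).ne'⟩

theorem general_or_rule_bounds {Ω : Type*} [MeasurableSpace Ω]
    (μ : Measure Ω) [IsProbabilityMeasure μ] (n : ℕ) (hn : 1 ≤ n)
    (E : Set Ω) (H : Fin n → Set Ω)
    (hE : MeasurableSet E) (hH : ∀ i, MeasurableSet (H i))
    (hpos : ∀ i, 0 < μ (H i))
    (p : Fin n → ℝ) (hp : ∀ i, p i = condP μ E (H i)) :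
    ((∀ i, 0 < p i) →
      1 / (1 + ∑ i, (1 - p i) / p i) ≤ condP μ E (⋃ i, H i)) ∧
    ((∀ i, p i < 1) →
      condP μ E (⋃ i, H i) ≤ (∑ i, p i / (1 - p i)) / (1 + ∑ i, p i / (1 - p i))) :=
  general_or_rule_bounds_general μ n hn E H hE hpos p hp
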